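/- Let H : ℝ → ℝ be the Heaviside function with H(y) = 1 for y > 0 and H(y) = 0 for y ≤ 0, and let ε, h₁, λ₁ ∈ ℝ. Then ∫_0^{2π} ((1 − H(τ − π/2) + H(τ − 3π/2))·ε·h₁ − 2λ₁)·cos²τ dτ = π·(ε·h₁/2 − 2λ₁); in particular this integral vanishes if and only if λ₁ = ε·h₁/4. -/

import Mathlib

open Real MeasureTheory

/-- Heaviside function: `H y = 1` for `y > 0`, `H y = 0` for `y ≤ 0`. -/
noncomputable def H (y : ℝ) : ℝ := if 0 < y then 1 else 0

lemma H_mul_eq_indicator (c : ℝ) :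
    (fun τ => H (τ - c) * Real.cos τ ^ 2)
      = Set.indicator (Set.Ioi c) (fun τ => Real.cos τ ^ 2) := by
  funext τ
  simp only [H, Set.indicator, Set.mem_Ioi]
  by_cases h : c < τ
  · rw [if_pos (by linarith), if_pos h]; ring
  · rw [if_neg (fun hh => h (by linarith)), if_neg h]; ring

lemma ind_intable (c a b : ℝ) :
    IntervalIntegrable (fun τ => H (τ - c) * Real.cos τ ^ 2) volume a b := by
  rw [H_mul_eq_indicator]
  constructor <;>
    exact ((Real.continuous_cos.pow 2).integrableOn_Ioc).indicator measurableSet_Ioi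

lemma ind_val (c : ℝ) (hc0 : 0 ≤ c) (hc2 : c ≤ 2 * π) :
    (∫ τ in (0:ℝ)..(2*π), H (τ - c) * Real.cos τ ^ 2)
      = ∫ τ in c..(2*π), Real.cos τ ^ 2 := by
  rw [H_mul_eq_indicator]
  rw [intervalIntegral.integral_of_le (by linarith [Real.pi_pos]),
      intervalIntegral.integral_of_le hc2,
      MeasureTheory.setIntegral_indicator measurableSet_Ioi]
  have hset : Set.Ioc (0:ℝ) (2*π) ∩ Set.Ioi c = Set.Ioc c (2*π) := by
    ext x
    simp only [Set.mem_inter_iff, Set.mem_Ioc, Set.mem_Ioi]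
    constructor
    · rintro ⟨⟨_, h2⟩, h3⟩; exact ⟨h3, h2⟩
    · rintro ⟨h1, h2⟩; exact ⟨⟨lt_of_le_of_lt hc0 h1, h2⟩, h1⟩
  rw [hset]

theorem stmt_8 (ε h₁ lam₁ : ℝ) :
    (∫ τ in (0 : ℝ)..(2 * π),
        ((1 - H (τ - π / 2) + H (τ - 3 * π / 2)) * ε * h₁ - 2 * lam₁)
          * Real.cos τ ^ 2)
      = π * (ε * h₁ / 2 - 2 * lam₁) ∧
    ((∫ τ in (0 : ℝ)..(2 * π),
        ((1 - H (τ - π / 2) + H (τ - 3 * π / 2)) * ε * h₁ - 2 * lam₁)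
          * Real.cos τ ^ 2) = 0 ↔ lam₁ = ε * h₁ / 4) := by
  have hπ := Real.pi_pos
  have hsplit : (fun τ => ((1 - H (τ - π / 2) + H (τ - 3 * π / 2)) * ε * h₁ - 2 * lam₁)
          * Real.cos τ ^ 2)
      = fun τ => ((ε * h₁ - 2 * lam₁) * Real.cos τ ^ 2
          - (ε * h₁) * (H (τ - π / 2) * Real.cos τ ^ 2))
          + (ε * h₁) * (H (τ - 3 * π / 2) * Real.cos τ ^ 2) := by
    funext τ; ring
  have hcos : IntervalIntegrable (fun τ => (ε * h₁ - 2 * lam₁) * Real.cos τ ^ 2)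
      volume 0 (2*π) := (Continuous.intervalIntegrable (by continuity) _ _)
  have h1i := (ind_intable (π/2) 0 (2*π)).const_mul (ε * h₁)
  have h2i := (ind_intable (3*π/2) 0 (2*π)).const_mul (ε * h₁)
  have hval : (∫ τ in (0 : ℝ)..(2 * π),
        ((1 - H (τ - π / 2) + H (τ - 3 * π / 2)) * ε * h₁ - 2 * lam₁)
          * Real.cos τ ^ 2) = π * (ε * h₁ / 2 - 2 * lam₁) := by
    rw [hsplit, intervalIntegral.integral_add (hcos.sub h1i) h2i,
        intervalIntegral.integral_sub hcos h1i,
        intervalIntegral.integral_const_mul, intervalIntegral.integral_const_mul,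
        intervalIntegral.integral_const_mul,
        ind_val (π/2) (by linarith) (by linarith),
        ind_val (3*π/2) (by linarith) (by linarith),
        integral_cos_sq, integral_cos_sq, integral_cos_sq]
    simp [Real.sin_two_pi, Real.cos_pi_div_two, Real.sin_pi_div_two]
    ring_nf
    rw [show π*(3/2) = π + π/2 by ring, Real.cos_add]
    simp
  refine ⟨hval, ?_⟩
  rw [hval]
  constructor
  · intro h
    rcases mul_eq_zero.mp h with h | h
    · linarith
    · linarith
  · intro h; rw [h]; ring
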